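/- arXiv:1408.7036 — 2 statements merged into one kernel-verified Lean document; each statement's English description precedes it below -/
import Mathlib

section
/- Let 0 < p < 1 and let E ⊆ [0, 2π) be a T-set of order N with defining polynomial U and explicit equilibrium density w_U. Then there exist real trigonometric polynomials T_n (T_n of degree at most n, not identically zero on E) and a sequence ε_n → 0 such that for every n, ∫_E |T_n′(t) / (n · 2π · w_U(t))|^p · w_U(t) dt ≥ (1 − ε_n) · ∫_E |T_n(t)|^p · w_U(t) dt. -/
open Real MeasureTheory Set Filter

noncomputable section

/-- `T` is a real trigonometric polynomial of degree at most `n`. -/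
def IsTrigPolyDegLE (T : ℝ → ℝ) (n : ℕ) : Prop :=
  ∃ a b : ℕ → ℝ, ∀ t : ℝ,
    T t = a 0 + ∑ k ∈ Finset.Icc 1 n, (a k * Real.cos (k * t) + b k * Real.sin (k * t))

/-- `U` is a real trigonometric polynomial of degree exactly `N`. -/
def IsTrigPolyDegEq (U : ℝ → ℝ) (N : ℕ) : Prop :=
  ∃ a b : ℕ → ℝ, (a N ≠ 0 ∨ b N ≠ 0) ∧ ∀ t : ℝ,
    U t = a 0 + ∑ k ∈ Finset.Icc 1 N, (a k * Real.cos (k * t) + b k * Real.sin (k * t))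

/-- `E ⊆ [0, 2π)` is a T-set of order `N` with defining polynomial `U` and branches `B`. -/
def IsTSetWithBranches (E : Set ℝ) (N : ℕ) (U : ℝ → ℝ) (B : Fin (2 * N) → Set ℝ) : Prop :=
  0 < N ∧ IsTrigPolyDegEq U N ∧
  E = {t ∈ Set.Ico (0 : ℝ) (2 * π) | U t ∈ Set.Icc (-1 : ℝ) 1} ∧
  (∀ h, ∃ x y : ℝ, x < y ∧ B h = Set.Icc x y) ∧
  (∀ h h', h ≠ h' → interior (B h) ∩ interior (B h') = ∅) ∧
  E = ⋃ h, B h ∧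
  (∀ h, StrictMonoOn U (B h) ∨ StrictAntiOn U (B h)) ∧
  (∀ h, U '' B h = Set.Icc (-1 : ℝ) 1)

/-- `E ⊆ [0, 2π)` is a T-set of order `N` with defining polynomial `U`. -/
def IsTSet (E : Set ℝ) (N : ℕ) (U : ℝ → ℝ) : Prop :=
  ∃ B : Fin (2 * N) → Set ℝ, IsTSetWithBranches E N U B

/-- The explicit density `w_U` of the equilibrium measure of `Γ_E`. -/
def eqDensity (N : ℕ) (U : ℝ → ℝ) (t : ℝ) : ℝ :=
  |deriv U t| / (2 * π * N * Real.sqrt (1 - U t ^ 2))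

/-- `A_m(T, X) = ∫_X |T'(t)/(m·2π·w_U(t))|^p · w_U(t) dt`. -/
def Aint (p : ℝ) (N : ℕ) (U : ℝ → ℝ) (m : ℕ) (T : ℝ → ℝ) (X : Set ℝ) : ℝ :=
  ∫ t in X, |deriv T t / ((m : ℝ) * (2 * π) * eqDensity N U t)| ^ p * eqDensity N U t

/-- `B(T, X) = ∫_X |T(t)|^p · w_U(t) dt`. -/
def Bint (p : ℝ) (N : ℕ) (U : ℝ → ℝ) (T : ℝ → ℝ) (X : Set ℝ) : ℝ :=
  ∫ t in X, |T t| ^ p * eqDensity N U t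

end

/-!
Take `T_n = T_m ∘ U` with `m = ⌊n / N⌋`, a trigonometric polynomial of degree `m N ≤ n`.
On each of the `2 N` branches `U` is a monotone bijection onto `[-1, 1]`, and after the further
substitution `U(t) = cos θ` the measure `w_U(t) dt` becomes `dθ / (2π N)`, while `|T_n|` and
`|T_n' / (n · 2π · w_U)|` become `|cos (m θ)|` and `(m N / n) |sin (m θ)|`. As
`∫₀^π |sin (m θ)|^p dθ = ∫₀^π |cos (m θ)|^p dθ`, the two integrals differ exactly by the factor
`(m N / n)^p`, which tends to `1`.
-/

def trigPolyDegLE (n : ℕ) : Submodule ℝ (ℝ → ℝ) where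
  carrier := {f | IsTrigPolyDegLE f n}
  zero_mem' := ⟨0, 0, fun t => by simp⟩
  add_mem' := by
    rintro f g ⟨a, b, hf⟩ ⟨c, d, hg⟩
    refine ⟨a + c, b + d, fun t => ?_⟩
    simp only [Pi.add_apply, hf, hg, add_mul, Finset.sum_add_distrib]
    ring
  smul_mem' := by
    rintro r f ⟨a, b, hf⟩
    refine ⟨r • a, r • b, fun t => ?_⟩
    simp only [Pi.smul_apply, smul_eq_mul, hf, mul_add, Finset.mul_sum, mul_assoc]

theorem trigPolyDegLE_mono {m n : ℕ} (hmn : m ≤ n) : trigPolyDegLE m ≤ trigPolyDegLE n := by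
  rintro f ⟨a, b, hf⟩
  refine ⟨fun k => if k ≤ m then a k else 0, fun k => if k ≤ m then b k else 0, fun t => ?_⟩
  dsimp only
  rw [hf, if_pos (Nat.zero_le m), ← Finset.sum_subset (Finset.Icc_subset_Icc_right hmn)]
  · exact congrArg _ (Finset.sum_congr rfl fun k hk => by simp [(Finset.mem_Icc.1 hk).2])
  · intro k hk hkm
    have : ¬k ≤ m := fun h => hkm (Finset.mem_Icc.2 ⟨(Finset.mem_Icc.1 hk).1, h⟩)
    simp [this]

theorem cos_natCast_mul_mem_trigPolyDegLE {k n : ℕ} (hk : k ≤ n) :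
    (fun t => cos (k * t)) ∈ trigPolyDegLE n := by
  refine ⟨fun j => if j = k then 1 else 0, 0, fun t => ?_⟩
  rcases Nat.eq_zero_or_pos k with rfl | hk0
  · simp [Finset.sum_ite_eq']
  · simp [Finset.sum_ite_eq', hk0.ne, hk0.ne', hk, Nat.one_le_iff_ne_zero]

theorem sin_natCast_mul_mem_trigPolyDegLE {k n : ℕ} (hk : k ≤ n) :
    (fun t => sin (k * t)) ∈ trigPolyDegLE n := by
  refine ⟨0, fun j => if j = k then 1 else 0, fun t => ?_⟩
  rcases Nat.eq_zero_or_pos k with rfl | hk0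
  · simp
  · simp [Finset.sum_ite_eq', hk0.ne', hk, Nat.one_le_iff_ne_zero]

theorem cos_intCast_mul_mem_trigPolyDegLE {z : ℤ} {n : ℕ} (hz : z.natAbs ≤ n) :
    (fun t => cos (z * t)) ∈ trigPolyDegLE n := by
  obtain ⟨k, rfl | rfl⟩ := Int.eq_nat_or_neg z <;>
    simp only [Int.natAbs_neg, Int.natAbs_natCast] at hz
  · exact_mod_cast cos_natCast_mul_mem_trigPolyDegLE hz
  · simpa only [Int.cast_neg, Int.cast_natCast, neg_mul, cos_neg] using
      cos_natCast_mul_mem_trigPolyDegLE hz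

theorem sin_intCast_mul_mem_trigPolyDegLE {z : ℤ} {n : ℕ} (hz : z.natAbs ≤ n) :
    (fun t => sin (z * t)) ∈ trigPolyDegLE n := by
  obtain ⟨k, rfl | rfl⟩ := Int.eq_nat_or_neg z <;>
    simp only [Int.natAbs_neg, Int.natAbs_natCast] at hz
  · exact_mod_cast sin_natCast_mul_mem_trigPolyDegLE hz
  · simpa only [Int.cast_neg, Int.cast_natCast, neg_mul, sin_neg, Pi.neg_def] using
      (trigPolyDegLE n).neg_mem (sin_natCast_mul_mem_trigPolyDegLE hz)

def trigAtoms (n : ℕ) : Set (ℝ → ℝ) :=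
  {f | ∃ k : ℕ, k ≤ n ∧ (f = (fun t => cos (k * t)) ∨ f = fun t => sin (k * t))}

theorem span_trigAtoms (n : ℕ) : Submodule.span ℝ (trigAtoms n) = trigPolyDegLE n := by
  refine le_antisymm (Submodule.span_le.2 ?_) fun f ⟨a, b, hf⟩ => ?_
  · rintro _ ⟨k, hk, rfl | rfl⟩
    exacts [cos_natCast_mul_mem_trigPolyDegLE hk, sin_natCast_mul_mem_trigPolyDegLE hk]
  have hcos : ∀ {k}, k ≤ n → (fun t : ℝ => cos (k * t)) ∈ Submodule.span ℝ (trigAtoms n) :=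
    fun hk => Submodule.subset_span ⟨_, hk, Or.inl rfl⟩
  have hsin : ∀ {k}, k ≤ n → (fun t : ℝ => sin (k * t)) ∈ Submodule.span ℝ (trigAtoms n) :=
    fun hk => Submodule.subset_span ⟨_, hk, Or.inr rfl⟩
  have hf' : f = a 0 • (fun t : ℝ => cos ((0 : ℕ) * t)) + ∑ k ∈ Finset.Icc 1 n,
      (a k • (fun t : ℝ => cos (k * t)) + b k • fun t : ℝ => sin (k * t)) := by
    funext t
    simp [hf]
  rw [hf']
  refine add_mem (Submodule.smul_mem _ _ (hcos (Nat.zero_le n)))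
    (Submodule.sum_mem _ fun k hk => ?_)
  have hk : k ≤ n := (Finset.mem_Icc.1 hk).2
  exact add_mem (Submodule.smul_mem _ _ (hcos hk)) (Submodule.smul_mem _ _ (hsin hk))

section ProductToSum

variable {j k a b : ℕ}

theorem cos_mul_cos_mem_trigPolyDegLE (hj : j ≤ a) (hk : k ≤ b) :
    (fun t => cos (j * t)) * (fun t => cos (k * t)) ∈ trigPolyDegLE (a + b) := by
  have h : (fun t => cos (j * t)) * (fun t => cos (k * t)) =
      (1 / 2 : ℝ) • (fun t => cos (((j - k : ℤ) : ℝ) * t)) +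
        (1 / 2 : ℝ) • fun t => cos (((j + k : ℤ) : ℝ) * t) := by
    funext t
    simp only [Pi.mul_apply, Pi.add_apply, Pi.smul_apply, smul_eq_mul]
    push_cast
    rw [sub_mul, add_mul, cos_sub, cos_add]
    ring
  rw [h]
  exact add_mem (Submodule.smul_mem _ _ (cos_intCast_mul_mem_trigPolyDegLE (by omega)))
    (Submodule.smul_mem _ _ (cos_intCast_mul_mem_trigPolyDegLE (by omega)))

theorem sin_mul_sin_mem_trigPolyDegLE (hj : j ≤ a) (hk : k ≤ b) :
    (fun t => sin (j * t)) * (fun t => sin (k * t)) ∈ trigPolyDegLE (a + b) := by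
  have h : (fun t => sin (j * t)) * (fun t => sin (k * t)) =
      (1 / 2 : ℝ) • (fun t => cos (((j - k : ℤ) : ℝ) * t)) +
        (-1 / 2 : ℝ) • fun t => cos (((j + k : ℤ) : ℝ) * t) := by
    funext t
    simp only [Pi.mul_apply, Pi.add_apply, Pi.smul_apply, smul_eq_mul]
    push_cast
    rw [sub_mul, add_mul, cos_sub, cos_add]
    ring
  rw [h]
  exact add_mem (Submodule.smul_mem _ _ (cos_intCast_mul_mem_trigPolyDegLE (by omega)))
    (Submodule.smul_mem _ _ (cos_intCast_mul_mem_trigPolyDegLE (by omega)))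

theorem sin_mul_cos_mem_trigPolyDegLE (hj : j ≤ a) (hk : k ≤ b) :
    (fun t => sin (j * t)) * (fun t => cos (k * t)) ∈ trigPolyDegLE (a + b) := by
  have h : (fun t => sin (j * t)) * (fun t => cos (k * t)) =
      (1 / 2 : ℝ) • (fun t => sin (((j - k : ℤ) : ℝ) * t)) +
        (1 / 2 : ℝ) • fun t => sin (((j + k : ℤ) : ℝ) * t) := by
    funext t
    simp only [Pi.mul_apply, Pi.add_apply, Pi.smul_apply, smul_eq_mul]
    push_cast
    rw [sub_mul, add_mul, sin_sub, sin_add]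
    ring
  rw [h]
  exact add_mem (Submodule.smul_mem _ _ (sin_intCast_mul_mem_trigPolyDegLE (by omega)))
    (Submodule.smul_mem _ _ (sin_intCast_mul_mem_trigPolyDegLE (by omega)))

end ProductToSum

theorem mul_mem_trigPolyDegLE {a b : ℕ} {f g : ℝ → ℝ} (hf : f ∈ trigPolyDegLE a)
    (hg : g ∈ trigPolyDegLE b) : f * g ∈ trigPolyDegLE (a + b) := by
  rw [← span_trigAtoms] at hf hg
  have hfg := Submodule.mul_mem_mul hf hg
  rw [Submodule.span_mul_span] at hfg
  refine Submodule.span_le.2 ?_ hfg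
  rintro _ ⟨_, ⟨j, hj, rfl | rfl⟩, _, ⟨k, hk, rfl | rfl⟩, rfl⟩
  · exact cos_mul_cos_mem_trigPolyDegLE hj hk
  · dsimp only
    rw [SetLike.mem_coe, mul_comm, add_comm]
    exact sin_mul_cos_mem_trigPolyDegLE hk hj
  · exact sin_mul_cos_mem_trigPolyDegLE hj hk
  · exact sin_mul_sin_mem_trigPolyDegLE hj hk

theorem pow_mem_trigPolyDegLE {U : ℝ → ℝ} {N : ℕ} (hU : U ∈ trigPolyDegLE N) :
    ∀ i : ℕ, U ^ i ∈ trigPolyDegLE (i * N)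
  | 0 => by simpa [Pi.one_def] using cos_natCast_mul_mem_trigPolyDegLE (Nat.zero_le 0)
  | i + 1 => by
    rw [pow_succ, add_mul, one_mul]
    exact mul_mem_trigPolyDegLE (pow_mem_trigPolyDegLE hU i) hU

theorem polynomial_eval_comp_mem_trigPolyDegLE {U : ℝ → ℝ} {N : ℕ} (hU : U ∈ trigPolyDegLE N)
    (P : Polynomial ℝ) : (fun t => P.eval (U t)) ∈ trigPolyDegLE (P.natDegree * N) := by
  have h : (fun t => P.eval (U t)) =
      ∑ i ∈ Finset.range (P.natDegree + 1), P.coeff i • U ^ i := by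
    funext t
    simp [Polynomial.eval_eq_sum_range]
  rw [h]
  refine Submodule.sum_mem _ fun i hi => Submodule.smul_mem _ _ ?_
  exact trigPolyDegLE_mono (Nat.mul_le_mul_right N (Finset.mem_range_succ_iff.1 hi))
    (pow_mem_trigPolyDegLE hU i)

theorem IsTrigPolyDegLE.differentiable {f : ℝ → ℝ} {n : ℕ} (hf : IsTrigPolyDegLE f n) :
    Differentiable ℝ f := by
  obtain ⟨a, b, h⟩ := hf
  rw [funext h]
  fun_prop

theorem tendsto_nat_div_mul_div_atTop {N : ℕ} (hN : N ≠ 0) :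
    Tendsto (fun n : ℕ => ((n / N * N : ℕ) : ℝ) / n) atTop (nhds 1) := by
  have h := ((tendsto_nat_floor_mul_div_atTop (a := (N : ℝ)⁻¹) (by positivity)).comp
    tendsto_natCast_atTop_atTop).const_mul (N : ℝ)
  rw [mul_inv_cancel₀ (by positivity)] at h
  refine h.congr fun n => ?_
  simp only [Function.comp_apply, inv_mul_eq_div, Nat.floor_div_eq_div, Nat.cast_mul]
  ring

theorem Function.Periodic.intervalIntegral_comp_natCast_mul {f : ℝ → ℝ} {T : ℝ}
    (hf : Function.Periodic f T) (hfi : ∀ t₁ t₂, IntervalIntegrable f volume t₁ t₂)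
    {m : ℕ} (hm : m ≠ 0) : ∫ x in 0..T, f (m * x) = ∫ x in 0..T, f x := by
  have h := hf.intervalIntegral_add_zsmul_eq m 0 hfi
  have hscale := intervalIntegral.mul_integral_comp_mul_left (a := 0) (b := T) (f := f) (c := m)
  simp only [zero_add, zsmul_eq_mul, Int.cast_natCast] at h
  rw [mul_zero, h] at hscale
  exact mul_left_cancel₀ (Nat.cast_ne_zero.2 hm) hscale

theorem integral_abs_sin_natCast_mul_rpow {p : ℝ} (hp : 0 ≤ p) {m : ℕ} (hm : m ≠ 0) :
    ∫ x in 0..π, |sin (m * x)| ^ p = ∫ x in 0..π, |cos (m * x)| ^ p := by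
  have hsin : Continuous fun x => |sin x| ^ p := by fun_prop (disch := exact fun _ => Or.inr hp)
  have hcos : Continuous fun x => |cos x| ^ p := by fun_prop (disch := exact fun _ => Or.inr hp)
  have hsin_per : Function.Periodic (fun x => |sin x| ^ p) π := fun x => by simp [sin_add_pi]
  have hcos_per : Function.Periodic (fun x => |cos x| ^ p) π := fun x => by simp [cos_add_pi]
  rw [hsin_per.intervalIntegral_comp_natCast_mul (fun _ _ => hsin.intervalIntegrable _ _) hm,
    hcos_per.intervalIntegral_comp_natCast_mul (fun _ _ => hcos.intervalIntegrable _ _) hm]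
  calc ∫ x in 0..π, |sin x| ^ p = ∫ x in π / 2..π / 2 + π, |sin x| ^ p := by
        simpa using hsin_per.intervalIntegral_add_eq 0 (π / 2)
    _ = ∫ x in 0..π, |cos x| ^ p := by
        have h := intervalIntegral.integral_comp_add_right (fun x => |sin x| ^ p) (π / 2)
          (a := 0) (b := π)
        simp only [sin_add_pi_div_two, zero_add, add_comm π] at h
        exact h.symm

theorem integrableOn_Icc_neg_one_one_of_sin_mul_comp_cos {H g : ℝ → ℝ}
    (hHg : ∀ θ ∈ Ioo 0 π, sin θ * H (cos θ) = g θ) (hg : Continuous g) :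
    IntegrableOn H (Icc (-1) 1) := by
  rw [← bijOn_cos.image_eq, integrableOn_image_iff_integrableOn_abs_deriv_smul measurableSet_Icc
    (fun x _ => (hasDerivAt_cos x).hasDerivWithinAt) injOn_cos,
    integrableOn_Icc_iff_integrableOn_Ioo]
  refine (hg.integrableOn_Icc.mono_set Ioo_subset_Icc_self).congr_fun (fun θ hθ => ?_)
    measurableSet_Ioo
  rw [smul_eq_mul, abs_neg, abs_of_pos (sin_pos_of_pos_of_lt_pi hθ.1 hθ.2), (hHg θ hθ).symm]

theorem integral_Icc_neg_one_one_of_sin_mul_comp_cos {H g : ℝ → ℝ}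
    (hHg : ∀ θ ∈ Ioo 0 π, sin θ * H (cos θ) = g θ) :
    ∫ u in Icc (-1) 1, H u = ∫ θ in 0..π, g θ := by
  rw [← bijOn_cos.image_eq, integral_image_eq_integral_abs_deriv_smul measurableSet_Icc
    (fun x _ => (hasDerivAt_cos x).hasDerivWithinAt) injOn_cos, integral_Icc_eq_integral_Ioo,
    intervalIntegral.integral_of_le pi_pos.le, integral_Ioc_eq_integral_Ioo]
  refine setIntegral_congr_fun measurableSet_Ioo fun θ hθ => ?_
  rw [smul_eq_mul, abs_neg, abs_of_pos (sin_pos_of_pos_of_lt_pi hθ.1 hθ.2), hHg θ hθ]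

theorem IsTrigPolyDegEq.mem_trigPolyDegLE {U : ℝ → ℝ} {N : ℕ} (hU : IsTrigPolyDegEq U N) :
    U ∈ trigPolyDegLE N :=
  let ⟨a, b, _, h⟩ := hU
  ⟨a, b, h⟩

namespace IsTSetWithBranches

variable {E : Set ℝ} {N : ℕ} {U : ℝ → ℝ} {B : Fin (2 * N) → Set ℝ}

theorem differentiable (hE : IsTSetWithBranches E N U B) : Differentiable ℝ U :=
  hE.2.1.mem_trigPolyDegLE.differentiable

theorem exists_mem_eq_one (hE : IsTSetWithBranches E N U B) : ∃ t ∈ E, U t = 1 := by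
  obtain ⟨hN, -, -, -, -, hEB, -, hBU⟩ := hE
  have h1 : (1 : ℝ) ∈ U '' B ⟨0, by omega⟩ := by
    rw [hBU]
    norm_num
  obtain ⟨t, ht, hUt⟩ := h1
  exact ⟨t, hEB ▸ mem_iUnion_of_mem _ ht, hUt⟩

theorem integral_abs_deriv_mul_comp (hE : IsTSetWithBranches E N U B) {H : ℝ → ℝ}
    (hH : IntegrableOn H (Icc (-1) 1)) :
    ∫ t in E, |deriv U t| * H (U t) = 2 * N * ∫ u in Icc (-1) 1, H u := by
  have hU := hE.differentiable
  obtain ⟨-, -, -, hBIcc, hBdisj, hEB, hBmono, hBU⟩ := hE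
  have hBmeas (h : Fin (2 * N)) : MeasurableSet (B h) := by
    obtain ⟨x, y, -, hxy⟩ := hBIcc h
    exact hxy ▸ measurableSet_Icc
  have hBinj (h : Fin (2 * N)) : InjOn U (B h) :=
    (hBmono h).elim StrictMonoOn.injOn StrictAntiOn.injOn
  have hderiv (h : Fin (2 * N)) : ∀ x ∈ B h, HasDerivWithinAt U (deriv U x) (B h) x :=
    fun x _ => (hU x).hasDerivAt.hasDerivWithinAt
  have hBint (h : Fin (2 * N)) : IntegrableOn (fun t => |deriv U t| * H (U t)) (B h) := by
    rw [← hBU h, integrableOn_image_iff_integrableOn_abs_deriv_smul (hBmeas h) (hderiv h)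
      (hBinj h)] at hH
    exact hH
  have hBae : Pairwise (Function.onFun (AEDisjoint volume) B) := by
    have hint (h : Fin (2 * N)) : interior (B h) =ᵐ[volume] B h := by
      obtain ⟨x, y, -, hxy⟩ := hBIcc h
      rw [hxy, interior_Icc]
      exact Ioo_ae_eq_Icc
    exact fun h h' hne => (disjoint_iff_inter_eq_empty.2 (hBdisj h h' hne)).aedisjoint.congr
      (hint h).symm (hint h').symm
  rw [hEB, integral_iUnion_ae (fun h => (hBmeas h).nullMeasurableSet) hBae
    (integrableOn_finite_iUnion.2 hBint), tsum_fintype]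
  have hbranch (h : Fin (2 * N)) : ∫ t in B h, |deriv U t| * H (U t) = ∫ u in Icc (-1) 1, H u := by
    rw [← hBU h, integral_image_eq_integral_abs_deriv_smul (hBmeas h) (hderiv h) (hBinj h)]
    rfl
  simp [hbranch]

end IsTSetWithBranches

theorem abs_mul_deriv_div_rpow_mul_eqDensity {N n : ℕ} (hn : n ≠ 0) (U : ℝ → ℝ) (p d t : ℝ) :
    |d * deriv U t / (n * (2 * π) * eqDensity N U t)| ^ p * eqDensity N U t =
      (N / n) ^ p / (2 * π * N) * (|deriv U t| * (|d * √(1 - U t ^ 2)| ^ p / √(1 - U t ^ 2))) := by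
  rcases eq_or_ne (eqDensity N U t) 0 with hw | hw
  · rw [hw, mul_zero]
    simp only [eqDensity, div_eq_zero_iff, abs_eq_zero, mul_eq_zero, pi_ne_zero,
      OfNat.ofNat_ne_zero, false_or, Nat.cast_eq_zero] at hw
    rcases hw with h | h | h <;> simp [h]
  have hv : deriv U t ≠ 0 := fun h => hw (by simp [eqDensity, h])
  have hN : (0 : ℝ) < N := (Nat.cast_nonneg N).lt_of_ne' fun h => hw (by simp [eqDensity, h])
  have hn : (0 : ℝ) < n := by positivity
  have hs : 0 < √(1 - U t ^ 2) :=
    (sqrt_nonneg _).lt_of_ne' fun h => hw (by simp [eqDensity, h])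
  have habs : |d * deriv U t / (n * (2 * π) * eqDensity N U t)| =
      N / n * |d * √(1 - U t ^ 2)| := by
    have hden : n * (2 * π) * eqDensity N U t = n * |deriv U t| / (N * √(1 - U t ^ 2)) := by
      unfold eqDensity
      field_simp
    rw [hden, abs_div, abs_mul d, abs_mul d, abs_div, abs_mul, abs_mul, abs_of_pos hs, abs_abs,
      abs_of_pos hn, abs_of_pos hN]
    field_simp
  rw [habs, mul_rpow (by positivity) (abs_nonneg _)]
  unfold eqDensity
  field_simp

/-- After the substitution `u = cos θ`, `derivRpowDensity p P u du` and `rpowDensity p P u du`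
become `|d/dθ P(cos θ)| ^ p dθ` and `|P(cos θ)| ^ p dθ`. -/
noncomputable def derivRpowDensity (p : ℝ) (P : Polynomial ℝ) (u : ℝ) : ℝ :=
  |P.derivative.eval u * √(1 - u ^ 2)| ^ p / √(1 - u ^ 2)

noncomputable def rpowDensity (p : ℝ) (P : Polynomial ℝ) (u : ℝ) : ℝ :=
  |P.eval u| ^ p / √(1 - u ^ 2)

theorem Aint_polynomial_eval_comp {N n : ℕ} (hn : n ≠ 0) {U : ℝ → ℝ} (hU : Differentiable ℝ U)
    (p : ℝ) (P : Polynomial ℝ) (X : Set ℝ) :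
    Aint p N U n (fun t => P.eval (U t)) X =
      (N / n) ^ p / (2 * π * N) * ∫ t in X, |deriv U t| * derivRpowDensity p P (U t) := by
  rw [Aint, ← integral_const_mul]
  congr 1
  funext t
  have hPU : HasDerivAt (fun t => P.eval (U t)) (P.derivative.eval (U t) * deriv U t) t :=
    (P.hasDerivAt (U t)).comp t (hU t).hasDerivAt
  rw [hPU.deriv]
  exact abs_mul_deriv_div_rpow_mul_eqDensity hn U p _ t

theorem Bint_polynomial_eval_comp (N : ℕ) (U : ℝ → ℝ) (p : ℝ) (P : Polynomial ℝ) (X : Set ℝ) :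
    Bint p N U (fun t => P.eval (U t)) X =
      1 / (2 * π * N) * ∫ t in X, |deriv U t| * rpowDensity p P (U t) := by
  rw [Bint, ← integral_const_mul]
  congr 1
  funext t
  rw [eqDensity, rpowDensity]
  ring

open Polynomial.Chebyshev in
theorem sin_mul_derivRpowDensity_chebyshevT_cos (p : ℝ) (m : ℕ) {θ : ℝ}
    (hθ : θ ∈ Ioo 0 π) :
    sin θ * derivRpowDensity p (T ℝ m) (cos θ) = (m : ℝ) ^ p * |sin (m * θ)| ^ p := by
  have hsin : 0 < sin θ := sin_pos_of_pos_of_lt_pi hθ.1 hθ.2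
  have hderiv : (T ℝ m).derivative.eval (cos θ) * sin θ = m * sin (m * θ) := by
    have h := U_real_cos θ ((m : ℤ) - 1)
    push_cast at h
    rw [sub_add_cancel] at h
    rw [T_derivative_eq_U, Polynomial.eval_mul, Polynomial.eval_intCast, mul_assoc, h]
    push_cast
    rfl
  rw [derivRpowDensity, ← sin_eq_sqrt_one_sub_cos_sq hθ.1.le hθ.2.le, hderiv, mul_div_cancel₀ _
    hsin.ne', abs_mul, Nat.abs_cast, mul_rpow (Nat.cast_nonneg m) (abs_nonneg _)]

open Polynomial.Chebyshev in
theorem sin_mul_rpowDensity_chebyshevT_cos (p : ℝ) (m : ℕ) {θ : ℝ} (hθ : θ ∈ Ioo 0 π) :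
    sin θ * rpowDensity p (T ℝ m) (cos θ) = |cos (m * θ)| ^ p := by
  rw [rpowDensity, ← sin_eq_sqrt_one_sub_cos_sq hθ.1.le hθ.2.le, T_real_cos,
    mul_div_cancel₀ _ (sin_pos_of_pos_of_lt_pi hθ.1 hθ.2).ne']
  rfl

open Polynomial.Chebyshev in
theorem IsTSetWithBranches.Aint_chebyshevT_comp {E : Set ℝ} {N : ℕ} {U : ℝ → ℝ}
    {B : Fin (2 * N) → Set ℝ} (hE : IsTSetWithBranches E N U B) {p : ℝ} (hp : 0 ≤ p) {m n : ℕ}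
    (hm : m ≠ 0) (hn : n ≠ 0) :
    Aint p N U n (fun t => (T ℝ m).eval (U t)) E =
      (((m * N : ℕ) : ℝ) / n) ^ p * Bint p N U (fun t => (T ℝ m).eval (U t)) E := by
  have hderiv := fun θ (hθ : θ ∈ Ioo 0 π) => sin_mul_derivRpowDensity_chebyshevT_cos p m hθ
  have hvalue := fun θ (hθ : θ ∈ Ioo 0 π) => sin_mul_rpowDensity_chebyshevT_cos p m hθ
  have hsin : Continuous fun θ : ℝ => (m : ℝ) ^ p * |sin (m * θ)| ^ p := by
    fun_prop (disch := exact fun _ => Or.inr hp)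
  have hcos : Continuous fun θ : ℝ => |cos (m * θ)| ^ p := by
    fun_prop (disch := exact fun _ => Or.inr hp)
  rw [Aint_polynomial_eval_comp hn hE.differentiable, Bint_polynomial_eval_comp,
    hE.integral_abs_deriv_mul_comp (integrableOn_Icc_neg_one_one_of_sin_mul_comp_cos hderiv hsin),
    hE.integral_abs_deriv_mul_comp (integrableOn_Icc_neg_one_one_of_sin_mul_comp_cos hvalue hcos),
    integral_Icc_neg_one_one_of_sin_mul_comp_cos hderiv,
    integral_Icc_neg_one_one_of_sin_mul_comp_cos hvalue, intervalIntegral.integral_const_mul,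
    integral_abs_sin_natCast_mul_rpow hp hm, Nat.cast_mul, mul_div_assoc,
    mul_rpow (Nat.cast_nonneg _) (by positivity)]
  ring

theorem lp_bernstein_on_Tset_sharpness_general
    (p : ℝ) (hp0 : 0 < p)
    (E : Set ℝ) (N : ℕ) (U : ℝ → ℝ) (hE : IsTSet E N U) :
    ∃ (T : ℕ → ℝ → ℝ) (ε : ℕ → ℝ), Filter.Tendsto ε Filter.atTop (nhds 0) ∧
      ∀ n : ℕ, IsTrigPolyDegLE (T n) n ∧ (∃ t ∈ E, T n t ≠ 0) ∧
        Aint p N U n (T n) E ≥ (1 - ε n) * Bint p N U (T n) E := by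
  obtain ⟨B, hE⟩ := hE
  refine ⟨fun n t => (Polynomial.Chebyshev.T ℝ (n / N : ℕ)).eval (U t),
    fun n => 1 - (((n / N * N : ℕ) : ℝ) / n) ^ p, ?_, fun n => ⟨?_, ?_, ?_⟩⟩
  · simpa using ((tendsto_nat_div_mul_div_atTop hE.1.ne').rpow_const (Or.inr hp0.le)).const_sub 1
  · have hT := polynomial_eval_comp_mem_trigPolyDegLE hE.2.1.mem_trigPolyDegLE
      (Polynomial.Chebyshev.T ℝ (n / N : ℕ))
    rw [Polynomial.Chebyshev.natDegree_T, Int.natAbs_natCast] at hT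
    exact trigPolyDegLE_mono (Nat.div_mul_le_self n N) hT
  · obtain ⟨t, ht, hUt⟩ := hE.exists_mem_eq_one
    exact ⟨t, ht, by simp [hUt, Polynomial.Chebyshev.T_eval_one]⟩
  · rw [sub_sub_cancel]
    rcases eq_or_ne (n / N) 0 with hm | hm
    · rw [hm, zero_mul, Nat.cast_zero, zero_div, zero_rpow hp0.ne', zero_mul]
      exact integral_nonneg fun t => by unfold eqDensity; positivity
    · exact (hE.Aint_chebyshevT_comp hp0.le hm fun hn => by simp [hn] at hm).ge

/-- Sharpness of the `L^p` Bernstein inequality on T-sets for `0 < p < 1`. -/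
theorem lp_bernstein_on_Tset_sharpness
    (p : ℝ) (hp0 : 0 < p) (hp1 : p < 1)
    (E : Set ℝ) (N : ℕ) (U : ℝ → ℝ) (hE : IsTSet E N U) :
    ∃ (T : ℕ → ℝ → ℝ) (ε : ℕ → ℝ), Filter.Tendsto ε Filter.atTop (nhds 0) ∧
      ∀ n : ℕ, IsTrigPolyDegLE (T n) n ∧ (∃ t ∈ E, T n t ≠ 0) ∧
        Aint p N U n (T n) E ≥ (1 - ε n) * Bint p N U (T n) E :=
  lp_bernstein_on_Tset_sharpness_general p hp0 E N U hE
end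

section
/- (Symmetrization) Let E ⊆ [0, 2π) be a T-set of order N with defining polynomial U and branches B₁, …, B_{2N}. For a point t ∈ E with U(t) ∈ (−1, 1), let t₁, …, t_{2N} be defined by t_h = (U restricted to B_h)^{−1}(U(t)), i.e. the 2N points of E satisfying U(t_h) = U(t). If V is a real trigonometric polynomial of degree at most n, then there exists an algebraic polynomial S of degree at most n/N such that Σ_{h=1}^{2N} V(t_h) = S(U(t)) for every t ∈ E with U(t) ∈ (−1, 1). -/
/-!
Write `z = e^{it}`. Clearing denominators, `z ^ N * (U t - u) = p z - u * z ^ N` for a polynomial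
`p` of degree `2N`. For `u ∈ (-1, 1)` the points `e^{i t_h}` are `2N` distinct roots of
`p - u X ^ N` (the `t_h` lie in the pairwise disjoint interiors of the branches), hence all of
its roots. By Vieta's formulas only the `N`-th elementary symmetric function of the roots depends
on `u`, and affinely, so Newton's identities make the `k`-th power sum of the roots a polynomial in
`u` of degree at most `k / N`. Since `V t = a₀ + Σ_k Re ((a_k - i b_k) z ^ k)`, summing over the
`t_h` gives a polynomial in `u` of degree at most `n / N`.
-/

open Real MeasureTheory Set Filter

open Polynomial Complex

section Newton

open Finset

variable {R : Type*} [CommRing R]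

theorem Multiset.psum_eq_mul_esymm_sub_sum (s : Multiset R) {k : ℕ} (hk : 0 < k) :
    (s.map (· ^ k)).sum = (-1) ^ (k + 1) * k * s.esymm k -
      ∑ a ∈ HasAntidiagonal.antidiagonal k with a.1 ∈ Set.Ioo 0 k,
        (-1) ^ a.1 * s.esymm a.1 * (s.map (· ^ a.2)).sum := by
  classical
  set ev := MvPolynomial.aeval (R := R) fun x : s.ToType => (x : R)
  have hpsum (j : ℕ) : ev (MvPolynomial.psum s.ToType R j) = (s.map (· ^ j)).sum := by
    rw [MvPolynomial.psum, map_sum, Finset.sum_eq_multiset_sum]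
    simp only [ev, map_pow, MvPolynomial.aeval_X]
    exact congrArg Multiset.sum (Multiset.map_univ_comp_coe s (· ^ j))
  have hesymm (j : ℕ) : ev (MvPolynomial.esymm s.ToType R j) = s.esymm j := by
    rw [MvPolynomial.aeval_esymm_eq_multiset_esymm, Multiset.map_univ_coe]
  have key := congrArg ev (MvPolynomial.psum_eq_mul_esymm_sub_sum s.ToType R k hk)
  simpa only [map_sub, map_mul, map_sum, map_pow, map_neg, map_one, map_natCast, hpsum,
    hesymm] using key

theorem exists_psum_eq_eval_of_esymm_eq_eval {M m : ℕ} (s : R → Multiset R)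
    (hcard : ∀ u, Multiset.card (s u) = m) (e : ℕ → R[X]) (he : ∀ j, (e j).natDegree ≤ j / M)
    (hs : ∀ u j, (s u).esymm j = (e j).eval u) (k : ℕ) :
    ∃ P : R[X], P.natDegree ≤ k / M ∧ ∀ u, ((s u).map (· ^ k)).sum = P.eval u := by
  induction k using Nat.strong_induction_on with
  | _ k ih =>
  rcases Nat.eq_zero_or_pos k with rfl | hk
  · exact ⟨C (m : R), by simp, fun u => by simp [hcard]⟩
  choose! P hPdeg hP using ih
  refine ⟨C ((-1) ^ (k + 1) * (k : R)) * e k - ∑ a ∈ antidiagonal k with a.1 ∈ Set.Ioo 0 k,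
      C ((-1) ^ a.1) * (e a.1 * P a.2), ?_, fun u => ?_⟩
  · refine (natDegree_sub_le _ _).trans (max_le ((natDegree_C_mul_le _ _).trans (he k))
      (natDegree_sum_le_of_forall_le _ _ fun a ha => ?_))
    simp only [Finset.mem_filter, HasAntidiagonal.mem_antidiagonal, Set.mem_Ioo] at ha
    calc (C ((-1) ^ a.1) * (e a.1 * P a.2)).natDegree
        ≤ a.1 / M + a.2 / M :=
          (natDegree_C_mul_le _ _).trans <| natDegree_mul_le.trans <|
            add_le_add (he _) (hPdeg _ (by omega))
      _ ≤ k / M := ha.1 ▸ Nat.div_add_div_le_add_div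
  · rw [Multiset.psum_eq_mul_esymm_sub_sum _ hk]
    simp only [eval_sub, eval_mul, eval_C, eval_finsetSum, hs]
    congr 1
    refine Finset.sum_congr rfl fun a ha => ?_
    simp only [Finset.mem_filter, HasAntidiagonal.mem_antidiagonal, Set.mem_Ioo] at ha
    rw [hP _ (by omega), mul_assoc]

end Newton

theorem Polynomial.natDegree_sub_C_mul_X_pow {R : Type*} [CommRing R] {p : R[X]} {N M : ℕ}
    (hp : p.natDegree = N + M) (hM : 0 < M) (u : R) :
    (p - C u * X ^ N).natDegree = N + M :=
  hp ▸ natDegree_sub_eq_left_of_natDegree_lt ((natDegree_C_mul_X_pow_le u N).trans_lt (by omega))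

section Vieta

variable {K : Type*} [Field K] [IsAlgClosed K]

theorem exists_esymm_roots_sub_C_mul_X_pow_eq_eval {p : K[X]} {N M : ℕ}
    (hp : p.natDegree = N + M) (hM : 0 < M) (j : ℕ) :
    ∃ e : K[X], e.natDegree ≤ j / M ∧ ∀ u, (p - C u * X ^ N).roots.esymm j = e.eval u := by
  have hdeg := natDegree_sub_C_mul_X_pow hp hM
  by_cases hj : j ≤ N + M
  · -- By Vieta, `esymm j = (-1) ^ j * coeff (N + M - j) / leadingCoeff`, and the only
    -- coefficient of `p - u X ^ N` that involves `u` is the one at `X ^ N`, i.e. `j = M`.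
    set c : K := if j = M then 1 else 0
    refine ⟨C (-(-1) ^ j * c / p.leadingCoeff) * X +
      C ((-1) ^ j * p.coeff (N + M - j) / p.leadingCoeff), ?_, fun u => ?_⟩
    · by_cases hjM : j = M
      · rw [hjM, Nat.div_self hM]
        exact natDegree_linear_le
      · simp [c, hjM]
    · have hlc : (p - C u * X ^ N).leadingCoeff = p.leadingCoeff :=
        leadingCoeff_sub_of_degree_lt (degree_lt_degree ((natDegree_C_mul_X_pow_le u N).trans_lt
          (by omega)))
      have hvieta := coeff_eq_esymm_roots_of_card (IsAlgClosed.card_roots_eq_natDegree)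
        (hdeg u ▸ Nat.sub_le (N + M) j)
      rw [hdeg, hlc, Nat.sub_sub_self hj, coeff_sub, coeff_C_mul_X_pow] at hvieta
      have hlc0 : p.leadingCoeff ≠ 0 := leadingCoeff_ne_zero.2 (by rintro rfl; simp at hp; omega)
      have hsign : ((-1 : K) ^ j) ^ 2 = 1 := by rw [← pow_mul, mul_comm, pow_mul]; simp
      simp only [show N + M - j = N ↔ j = M by omega] at hvieta
      simp only [eval_add, eval_mul, eval_C, eval_X, c]
      field_simp
      split_ifs at hvieta ⊢ <;>
        linear_combination (-(-1) ^ j) * hvieta -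
          ((p - C u * X ^ N).roots.esymm j * p.leadingCoeff) * hsign
  · refine ⟨0, by simp, fun u => ?_⟩
    rw [Multiset.esymm, Multiset.powersetCard_eq_empty]
    · simp
    · rw [IsAlgClosed.card_roots_eq_natDegree, hdeg]
      omega

theorem exists_psum_roots_sub_C_mul_X_pow_eq_eval {p : K[X]} {N M : ℕ}
    (hp : p.natDegree = N + M) (hM : 0 < M) (k : ℕ) :
    ∃ P : K[X], P.natDegree ≤ k / M ∧
      ∀ u, ((p - C u * X ^ N).roots.map (· ^ k)).sum = P.eval u := by
  choose e he hes using exists_esymm_roots_sub_C_mul_X_pow_eq_eval hp hM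
  refine exists_psum_eq_eval_of_esymm_eq_eval (m := N + M) _ (fun u => ?_) e he
    (fun u j => hes j u) k
  rw [IsAlgClosed.card_roots_eq_natDegree, natDegree_sub_C_mul_X_pow hp hM]

end Vieta

theorem exp_mul_I_pow (t : ℝ) (k : ℕ) : exp (t * I) ^ k = exp (↑(k * t) * I) := by
  rw [← Complex.exp_nat_mul, ofReal_mul, ofReal_natCast, mul_assoc]

theorem re_mul_exp_mul_I_pow (a b t : ℝ) (k : ℕ) :
    (((a : ℂ) - b * I) * exp (t * I) ^ k).re = a * Real.cos (k * t) + b * Real.sin (k * t) := by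
  rw [exp_mul_I_pow, exp_mul_I, ← ofReal_cos, ← ofReal_sin]
  simp only [mul_re, sub_re, sub_im, add_re, add_im, ofReal_re, ofReal_im, I_re, I_im, mul_im]
  ring

theorem half_mul_exp_mul_I_add_half_mul_exp_neg (a b θ : ℝ) :
    ((a : ℂ) - b * I) / 2 * exp (θ * I) + ((a : ℂ) + b * I) / 2 * exp (-(θ * I)) =
      (a * Real.cos θ + b * Real.sin θ : ℝ) := by
  rw [← neg_mul, exp_mul_I, exp_mul_I, Complex.cos_neg, Complex.sin_neg]
  simp only [ofReal_add, ofReal_mul, ofReal_cos, ofReal_sin]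
  linear_combination -(b * Complex.sin θ) * I_sq

theorem Complex.injOn_exp_mul_I_Ico : InjOn (fun t : ℝ => exp (t * I)) (Ico 0 (2 * Real.pi)) :=
  fun s hs r hr h => Circle.exp_injOn_Ico (by simp) hs hr (Subtype.ext h)

theorem IsTrigPolyDegEq.exists_polynomial {U : ℝ → ℝ} {N : ℕ} (hN : 0 < N)
    (hU : IsTrigPolyDegEq U N) :
    ∃ p : ℂ[X], p.natDegree = N + N ∧ ∀ t : ℝ, p.eval (exp (t * I)) = exp (t * I) ^ N * U t := by
  obtain ⟨a, b, hab, hU⟩ := hU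
  refine ⟨C (a 0 : ℂ) * X ^ N + ∑ k ∈ Finset.Icc 1 N,
      (C (((a k : ℂ) - b k * I) / 2) * X ^ (N + k) + C (((a k : ℂ) + b k * I) / 2) * X ^ (N - k)),
      natDegree_eq_of_le_of_coeff_ne_zero ?_ ?_, fun t => ?_⟩
  · refine natDegree_add_le_of_degree_le ((natDegree_C_mul_X_pow_le _ _).trans (by omega))
      (natDegree_sum_le_of_forall_le _ _ fun k hk => ?_)
    have hkN := (Finset.mem_Icc.1 hk).2
    exact natDegree_add_le_of_degree_le ((natDegree_C_mul_X_pow_le _ _).trans (by omega))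
      ((natDegree_C_mul_X_pow_le _ _).trans (by omega))
  · have hsub : ∀ k ∈ Finset.Icc 1 N, N + N ≠ N - k := fun k hk => by omega
    simp only [coeff_add, coeff_C_mul_X_pow, finsetSum_coeff]
    rw [if_neg (by omega), zero_add,
      Finset.sum_congr rfl fun k hk => by rw [if_neg (hsub k hk), add_zero]]
    simp only [Nat.add_left_cancel_iff, Finset.sum_ite_eq, Finset.mem_Icc, le_refl, and_true,
      if_pos (Nat.one_le_of_lt hN)]
    contrapose! hab
    simpa [Complex.ext_iff] using hab
  · have hz : exp (t * I) ≠ 0 := exp_ne_zero _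
    have hterm : ∀ k ∈ Finset.Icc 1 N,
        ((a k : ℂ) - b k * I) / 2 * exp (t * I) ^ (N + k) +
          ((a k : ℂ) + b k * I) / 2 * exp (t * I) ^ (N - k) =
        exp (t * I) ^ N * (a k * Real.cos (k * t) + b k * Real.sin (k * t) : ℝ) := by
      intro k hk
      rw [pow_add, pow_sub₀ _ hz (Finset.mem_Icc.1 hk).2, exp_mul_I_pow t k, ← Complex.exp_neg,
        ← half_mul_exp_mul_I_add_half_mul_exp_neg]
      ring
    simp only [eval_add, eval_mul, eval_C, eval_pow, eval_X, eval_finsetSum,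
      Finset.sum_congr rfl hterm, hU, ← Finset.mul_sum]
    push_cast
    ring

theorem Polynomial.exists_natDegree_le_eval_ofReal_eq_re (G : ℂ[X]) :
    ∃ S : ℝ[X], S.natDegree ≤ G.natDegree ∧ ∀ x : ℝ, S.eval x = (G.eval (x : ℂ)).re := by
  refine ⟨∑ j ∈ Finset.range (G.natDegree + 1), C (G.coeff j).re * X ^ j,
    natDegree_sum_le_of_forall_le _ _ fun j hj => (natDegree_C_mul_X_pow_le _ _).trans
      (Nat.lt_succ_iff.1 (Finset.mem_range.1 hj)), fun x => ?_⟩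
  rw [eval_eq_sum_range (p := G), re_sum, eval_finsetSum]
  simp [← ofReal_pow]

theorem IsTrigPolyDegLE.exists_sum_eq_eval {V : ℝ → ℝ} {n : ℕ} (hV : IsTrigPolyDegLE V n)
    {ι : Type*} [Fintype ι] {M : ℕ} (P : ℕ → ℂ[X]) (hP : ∀ k, (P k).natDegree ≤ k / M) :
    ∃ S : ℝ[X], S.natDegree ≤ n / M ∧ ∀ (ts : ι → ℝ) (u : ℝ),
      (∀ k, ∑ h, exp (ts h * I) ^ k = (P k).eval (u : ℂ)) → ∑ h, V (ts h) = S.eval u := by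
  obtain ⟨a, b, hV⟩ := hV
  obtain ⟨S, hSdeg, hS⟩ := (C ((Fintype.card ι * a 0 : ℝ) : ℂ) +
    ∑ k ∈ Finset.Icc 1 n, C ((a k : ℂ) - b k * I) * P k).exists_natDegree_le_eval_ofReal_eq_re
  refine ⟨S, hSdeg.trans (natDegree_add_le_of_degree_le
    ((natDegree_C _).trans_le (Nat.zero_le _)) (natDegree_sum_le_of_forall_le _ _ fun k hk =>
      (natDegree_C_mul_le _ _).trans ((hP k).trans
        (Nat.div_le_div_right (Finset.mem_Icc.1 hk).2)))), fun ts u hts => ?_⟩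
  rw [hS, eval_add, eval_C, eval_finsetSum, add_re, ofReal_re, re_sum]
  simp only [hV, eval_mul, eval_C, ← hts, Finset.mul_sum, re_sum, re_mul_exp_mul_I_pow]
  rw [Finset.sum_add_distrib, Finset.sum_const, Finset.card_univ, nsmul_eq_mul, Finset.sum_comm]

theorem Polynomial.roots_eq_map_of_injective {R : Type*} [CommRing R] [IsDomain R] {q : R[X]}
    (hq : q ≠ 0) {ι : Type*} [Fintype ι] {f : ι → R} (hf : Function.Injective f)
    (hroot : ∀ i, q.IsRoot (f i)) (hdeg : q.natDegree ≤ Fintype.card ι) :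
    q.roots = Finset.univ.val.map f := by
  have hle : Finset.univ.val.map f ≤ q.roots :=
    (Multiset.le_iff_subset (Finset.univ.nodup.map hf)).2 fun x hx => by
      obtain ⟨i, -, rfl⟩ := Multiset.mem_map.1 hx
      exact (mem_roots hq).2 (hroot i)
  refine (Multiset.eq_of_le_of_card_le hle ?_).symm
  simpa using (card_roots' q).trans hdeg

theorem mem_Ioo_of_image_Icc_eq {α β : Type*} [PartialOrder α] [Preorder β] {f : α → β}
    {x y t : α} {c d : β} (hf : MonotoneOn f (Icc x y) ∨ AntitoneOn f (Icc x y))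
    (himg : f '' Icc x y = Icc c d) (ht : t ∈ Icc x y) (hft : f t ∈ Ioo c d) : t ∈ Ioo x y := by
  have hcd : c ≤ d := hft.1.le.trans hft.2.le
  obtain ⟨r, hr, hrc⟩ : c ∈ f '' Icc x y := himg ▸ left_mem_Icc.2 hcd
  obtain ⟨s, hs, hsd⟩ : d ∈ f '' Icc x y := himg ▸ right_mem_Icc.2 hcd
  refine ⟨ht.1.lt_of_ne ?_, ht.2.lt_of_ne' ?_⟩ <;> rintro rfl <;> rcases hf with hf | hf
  · exact (hft.1.trans_le (hrc ▸ hf ht hr hr.1)).false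
  · exact (hft.2.trans_le (hsd ▸ hf ht hs hs.1)).false
  · exact (hft.2.trans_le (hsd ▸ hf hs ht hs.2)).false
  · exact (hft.1.trans_le (hrc ▸ hf hr ht hr.2)).false

namespace IsTSetWithBranches

variable {E : Set ℝ} {N : ℕ} {U : ℝ → ℝ} {B : Fin (2 * N) → Set ℝ}

theorem subset_Ico (hE : IsTSetWithBranches E N U B) (h : Fin (2 * N)) :
    B h ⊆ Ico 0 (2 * π) := by
  obtain ⟨-, -, hE, -, -, hEB, -, -⟩ := hE
  exact fun t ht => (hE ▸ hEB ▸ mem_iUnion_of_mem h ht : t ∈ {t ∈ Ico 0 (2 * π) | _}).1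

theorem injective_of_mem_Ioo (hE : IsTSetWithBranches E N U B) {u : ℝ} (hu : u ∈ Ioo (-1) 1)
    {ts : Fin (2 * N) → ℝ} (hts : ∀ h, ts h ∈ B h ∧ U (ts h) = u) : Function.Injective ts := by
  obtain ⟨-, -, -, hBIcc, hdisj, -, hmono, himg⟩ := hE
  have hint : ∀ h, ts h ∈ interior (B h) := fun h => by
    obtain ⟨x, y, -, hB⟩ := hBIcc h
    have hmono' := (hmono h).imp StrictMonoOn.monotoneOn StrictAntiOn.antitoneOn
    have himg' := himg h
    rw [hB] at hmono' himg'
    rw [hB, interior_Icc]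
    exact mem_Ioo_of_image_Icc_eq hmono' himg' (hB ▸ (hts h).1) ((hts h).2 ▸ hu)
  intro h h' heq
  by_contra hne
  exact (hdisj h h' hne).subset ⟨hint h, heq ▸ hint h'⟩

end IsTSetWithBranches

/-- Symmetrization: the sum of a trigonometric polynomial over the `2N` branch
preimages is an algebraic polynomial of degree at most `n/N` of `U(t)`. -/
theorem symmetrization_on_Tset
    (E : Set ℝ) (N : ℕ) (U : ℝ → ℝ) (B : Fin (2 * N) → Set ℝ)
    (hE : IsTSetWithBranches E N U B)
    (n : ℕ) (V : ℝ → ℝ) (hV : IsTrigPolyDegLE V n) :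
    ∃ S : Polynomial ℝ, (S.natDegree : ℝ) ≤ (n : ℝ) / (N : ℝ) ∧
      ∀ t ∈ E, U t ∈ Set.Ioo (-1 : ℝ) 1 →
        ∀ ts : Fin (2 * N) → ℝ, (∀ h, ts h ∈ B h ∧ U (ts h) = U t) →
          ∑ h, V (ts h) = S.eval (U t) := by
  obtain ⟨p, hpdeg, hp⟩ := hE.2.1.exists_polynomial hE.1
  choose P hPdeg hP using exists_psum_roots_sub_C_mul_X_pow_eq_eval hpdeg hE.1
  obtain ⟨S, hSdeg, hS⟩ := hV.exists_sum_eq_eval (ι := Fin (2 * N)) P hPdeg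
  refine ⟨S, (Nat.cast_le.2 hSdeg).trans Nat.cast_div_le, fun t _ hUt ts hts =>
    hS ts (U t) fun k => ?_⟩
  have hdeg := natDegree_sub_C_mul_X_pow hpdeg hE.1 (U t : ℂ)
  have hroots : (p - C (U t : ℂ) * X ^ N).roots = Finset.univ.val.map fun h => exp (ts h * I) := by
    refine roots_eq_map_of_injective ?_ (fun h h' heq => hE.injective_of_mem_Ioo hUt hts ?_)
      (fun h => ?_) ?_
    · rintro h0
      rw [h0, natDegree_zero] at hdeg
      linarith [hE.1]
    · exact injOn_exp_mul_I_Ico (hE.subset_Ico h (hts h).1) (hE.subset_Ico h' (hts h').1) heq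
    · rw [IsRoot, eval_sub, hp, (hts h).2]
      simp only [eval_mul, eval_C, eval_pow, eval_X]
      ring
    · rw [hdeg, Fintype.card_fin, two_mul]
  rw [← hP k, hroots, Multiset.map_map, Finset.sum_eq_multiset_sum]
  rfl
end
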